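/- Let τ and d be real numbers with 0 < τ < d, let α = α(τ,d), and let m ≥ 3 be an integer. Then K_m ≥ 1 - 2^{1-m/2}·(τ/d)^{m-1} ≥ 1 - 1/√2; in particular |C_3| ≥ (1 - 1/√2)·τ/|α|³. -/

import Mathlib

/-- The saddle point `α(τ,d) = -i (d/τ - √(d²/τ² - 1))`. -/
noncomputable def alph (τ d : ℝ) : ℂ :=
  -Complex.I * ((d / τ - Real.sqrt (d ^ 2 / τ ^ 2 - 1) : ℝ) : ℂ)

/-- `C_m = (-1)^{m+1} d/(1+α)^m + d/(1-α)^m + (-1)^{m+1} iτ/α^m`. -/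
noncomputable def Cm (τ d : ℝ) (m : ℕ) : ℂ :=
  (-1) ^ (m + 1) * (d : ℂ) / (1 + alph τ d) ^ m + (d : ℂ) / (1 - alph τ d) ^ m +
    (-1) ^ (m + 1) * Complex.I * (τ : ℂ) / alph τ d ^ m

/-- `K_m = 1 - (iτ/d)^{m-1} [(-1)^{m+1} ((1-α)/2)^m + ((1+α)/2)^m]`. -/
noncomputable def Kc (τ d : ℝ) (m : ℕ) : ℂ :=
  1 - (Complex.I * (τ : ℂ) / (d : ℂ)) ^ (m - 1) *
    ((-1) ^ (m + 1) * ((1 - alph τ d) / 2) ^ m + ((1 + alph τ d) / 2) ^ m)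


/-!
Write `α = -i a` with `a = d/τ - √(d²/τ² - 1) ∈ (0, 1]`, the smaller root of `τ a² - 2 d a + τ = 0`.
Then `|1 ± α| = √(1 + a²) ≤ √2`, so the bracket in `K_m` has modulus at most `2 · 2^{-m/2}`, which
gives `Re K_m ≥ 1 - 2^{1-m/2} (τ/d)^{m-1}`, and for `m ≥ 3`, `τ < d` the subtracted term is at most
`2^{-1/2}`. The quadratic equation reads `(1 + α)(1 - α) τ = 2 d a`; it turns `d/(1 ± α)^m` into
`τ^m (1 ∓ α)^m / (2^m d^{m-1} a^m)`, which is exactly the matching term of `K_m` times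
`-(-i)^{m-1} τ/a^m`. Hence `|C_m| = (τ/|α|^m) |K_m|`, and `m = 3` gives the bound on `|C₃|`.
-/

open Complex

namespace Real

lemma sub_sqrt_sq_sub_one_pos {x : ℝ} (hx : 1 ≤ x) : 0 < x - √(x ^ 2 - 1) := by
  rw [sub_pos, sqrt_lt' (by linarith)]
  linarith

lemma sub_sqrt_sq_sub_one_le_one {x : ℝ} (hx : 1 ≤ x) : x - √(x ^ 2 - 1) ≤ 1 := by
  rw [sub_le_comm, le_sqrt (by linarith) (by nlinarith)]
  nlinarith

lemma sub_sqrt_sq_sub_one_sq_add_one {x : ℝ} (hx : 1 ≤ x ^ 2) :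
    (x - √(x ^ 2 - 1)) ^ 2 + 1 = 2 * x * (x - √(x ^ 2 - 1)) := by
  linear_combination sq_sqrt (sub_nonneg.2 hx)

lemma sqrt_two_div_two_pow (n : ℕ) : (√2 / 2) ^ n = 2 ^ (-(n / 2 : ℝ)) := by
  rw [sqrt_eq_rpow, ← rpow_natCast, div_eq_mul_inv, ← rpow_neg_one 2, ← rpow_add two_pos,
    ← rpow_mul zero_le_two]
  congr 1
  ring

end Real

lemma norm_one_add_ofReal_mul_I_le_sqrt_two {x : ℝ} (hx : x ^ 2 ≤ 1) :
    ‖1 + x * I‖ ≤ √2 := by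
  rw [← ofReal_one, norm_add_mul_I]
  gcongr
  linarith

lemma norm_neg_one_pow_mul_half_pow_add_half_pow_le {z w : ℂ} (hz : ‖z‖ ≤ √2) (hw : ‖w‖ ≤ √2)
    (n : ℕ) : ‖(-1) ^ (n + 1) * (z / 2) ^ n + (w / 2) ^ n‖ ≤ 2 ^ (1 - n / 2 : ℝ) := by
  have half_le {u : ℂ} (hu : ‖u‖ ≤ √2) : ‖(u / 2) ^ n‖ ≤ (√2 / 2) ^ n := by
    rw [norm_pow, norm_div, Complex.norm_two]
    gcongr
  calc ‖(-1) ^ (n + 1) * (z / 2) ^ n + (w / 2) ^ n‖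
      ≤ ‖(z / 2) ^ n‖ + ‖(w / 2) ^ n‖ := by
        simpa only [norm_mul, norm_pow, norm_neg, norm_one, one_pow, one_mul] using
          norm_add_le ((-1) ^ (n + 1) * (z / 2) ^ n) ((w / 2) ^ n)
    _ ≤ 2 * (√2 / 2) ^ n := by linarith [half_le hz, half_le hw]
    _ = 2 ^ (1 - n / 2 : ℝ) := by
        rw [Real.sqrt_two_div_two_pow, sub_eq_add_neg, Real.rpow_add two_pos, Real.rpow_one]

lemma rpow_mul_pow_le_one_div_sqrt_two {r : ℝ} (hr₀ : 0 ≤ r) (hr₁ : r ≤ 1) {m : ℕ} (hm : 3 ≤ m) :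
    (2 : ℝ) ^ (1 - m / 2 : ℝ) * r ^ (m - 1) ≤ 1 / √2 := by
  have h2 : (2 : ℝ) ^ (1 - m / 2 : ℝ) ≤ 2 ^ (-(1 / 2) : ℝ) := by
    gcongr
    · norm_num
    · have : (3 : ℝ) ≤ m := by exact_mod_cast hm
      linarith
  rw [Real.rpow_neg zero_le_two, ← Real.sqrt_eq_rpow, ← one_div] at h2
  calc (2 : ℝ) ^ (1 - m / 2 : ℝ) * r ^ (m - 1) ≤ 1 / √2 * 1 := by
        gcongr
        exact pow_le_one₀ hr₀ hr₁
    _ = 1 / √2 := mul_one _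

lemma div_pow_succ_eq_of_mul_mul_eq {τ d a : ℝ} (hd : d ≠ 0) (ha : a ≠ 0) {p q : ℂ}
    (hpq : p * q * τ = 2 * d * a) (n : ℕ) :
    d / p ^ (n + 1) = (-I) ^ n * (τ / a ^ (n + 1)) * ((I * τ / d) ^ n * (q / 2) ^ (n + 1)) := by
  have hd' : (d : ℂ) ≠ 0 := ofReal_ne_zero.2 hd
  have ha' : (a : ℂ) ≠ 0 := ofReal_ne_zero.2 ha
  have hp : p ≠ 0 := by
    rintro rfl
    simp [hd, ha] at hpq
  have hI : (-I) ^ n * I ^ n = 1 := by rw [← mul_pow]; simp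
  calc (d : ℂ) / p ^ (n + 1) = (τ * q) ^ (n + 1) / (d ^ n * (2 * a) ^ (n + 1)) := by
        rw [div_eq_div_iff (pow_ne_zero _ hp) (by simp [hd', ha'])]
        linear_combination (-1 : ℂ) * congrArg (· ^ (n + 1)) hpq
    _ = (-I) ^ n * I ^ n * (τ / a ^ (n + 1)) * ((τ / d) ^ n * (q / 2) ^ (n + 1)) := by
        rw [hI, one_mul, div_pow, div_pow, mul_pow, mul_pow]
        field_simp
        ring
    _ = _ := by rw [mul_div_assoc, mul_pow]; ring

lemma neg_one_pow_mul_I_div_pow (τ a : ℝ) (n : ℕ) :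
    (-1) ^ (n + 1 + 1) * I * τ / (-I * a) ^ (n + 1) = -(-I) ^ n * (τ / a ^ (n + 1)) := by
  have hI : (-1) ^ (n + 1 + 1) * I / (-I) ^ (n + 1) = -(-I) ^ n := by
    have hsq : (-I) ^ n * (-I) ^ n = (-1) ^ n := by rw [← mul_pow]; simp
    rw [div_eq_iff (pow_ne_zero _ (neg_ne_zero.2 I_ne_zero))]
    linear_combination (-I) * hsq
  rw [← hI, mul_pow]
  ring

noncomputable def alphAbs (τ d : ℝ) : ℝ := d / τ - √(d ^ 2 / τ ^ 2 - 1)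

lemma alph_eq (τ d : ℝ) : alph τ d = -I * alphAbs τ d := rfl

section alphAbs

variable {τ d : ℝ}

lemma alphAbs_eq : alphAbs τ d = d / τ - √((d / τ) ^ 2 - 1) := by rw [alphAbs, div_pow]

lemma alphAbs_pos (h0 : 0 < τ) (hτd : τ < d) : 0 < alphAbs τ d :=
  alphAbs_eq ▸ Real.sub_sqrt_sq_sub_one_pos ((one_le_div h0).2 hτd.le)

lemma alphAbs_le_one (h0 : 0 < τ) (hτd : τ < d) : alphAbs τ d ≤ 1 :=
  alphAbs_eq ▸ Real.sub_sqrt_sq_sub_one_le_one ((one_le_div h0).2 hτd.le)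

lemma mul_alphAbs_sq_add_one (h0 : 0 < τ) (hτd : τ < d) :
    τ * (alphAbs τ d ^ 2 + 1) = 2 * d * alphAbs τ d := by
  have hx : 1 ≤ (d / τ) ^ 2 := one_le_pow₀ ((one_le_div h0).2 hτd.le)
  rw [alphAbs_eq, Real.sub_sqrt_sq_sub_one_sq_add_one hx]
  field_simp

lemma norm_alph (h0 : 0 < τ) (hτd : τ < d) : ‖alph τ d‖ = alphAbs τ d := by
  simp [alph_eq, abs_of_pos (alphAbs_pos h0 hτd)]

lemma one_add_alph_mul_one_sub_alph_mul (h0 : 0 < τ) (hτd : τ < d) :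
    (1 + alph τ d) * (1 - alph τ d) * τ = 2 * d * alphAbs τ d := by
  have h := congrArg ((↑) : ℝ → ℂ) (mul_alphAbs_sq_add_one h0 hτd)
  push_cast at h
  rw [alph_eq]
  linear_combination h - (τ : ℂ) * alphAbs τ d ^ 2 * I_sq

lemma norm_one_add_alph_le (h0 : 0 < τ) (hτd : τ < d) : ‖1 + alph τ d‖ ≤ √2 := by
  have h : 1 + alph τ d = 1 + ((-alphAbs τ d : ℝ) : ℂ) * I := by rw [alph_eq]; push_cast; ring
  rw [h]
  apply norm_one_add_ofReal_mul_I_le_sqrt_two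
  nlinarith [alphAbs_pos h0 hτd, alphAbs_le_one h0 hτd]

lemma norm_one_sub_alph_le (h0 : 0 < τ) (hτd : τ < d) : ‖1 - alph τ d‖ ≤ √2 := by
  have h : 1 - alph τ d = 1 + (alphAbs τ d : ℂ) * I := by rw [alph_eq]; ring
  rw [h]
  apply norm_one_add_ofReal_mul_I_le_sqrt_two
  nlinarith [alphAbs_pos h0 hτd, alphAbs_le_one h0 hτd]

end alphAbs

lemma one_sub_rpow_mul_pow_le_re_Kc {τ d : ℝ} (h0 : 0 < τ) (hτd : τ < d) (m : ℕ) :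
    1 - (2 : ℝ) ^ (1 - m / 2 : ℝ) * (τ / d) ^ (m - 1) ≤ (Kc τ d m).re := by
  have hd : 0 < d := h0.trans hτd
  have hnorm : ‖(I * τ / d : ℂ)‖ = τ / d := by
    simp [abs_of_pos h0, abs_of_pos hd]
  calc 1 - (2 : ℝ) ^ (1 - m / 2 : ℝ) * (τ / d) ^ (m - 1)
      ≤ 1 - ‖(I * τ / d : ℂ) ^ (m - 1) * ((-1) ^ (m + 1) * ((1 - alph τ d) / 2) ^ m +
          ((1 + alph τ d) / 2) ^ m)‖ := by
        rw [norm_mul, norm_pow, hnorm, mul_comm]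
        gcongr
        exact norm_neg_one_pow_mul_half_pow_add_half_pow_le
          (norm_one_sub_alph_le h0 hτd) (norm_one_add_alph_le h0 hτd) m
    _ ≤ (Kc τ d m).re := by
        rw [Kc, sub_re, one_re]
        linarith [re_le_norm ((I * τ / d : ℂ) ^ (m - 1) * ((-1) ^ (m + 1) *
          ((1 - alph τ d) / 2) ^ m + ((1 + alph τ d) / 2) ^ m))]

lemma Cm_succ_eq {τ d : ℝ} (h0 : 0 < τ) (hτd : τ < d) (n : ℕ) :
    Cm τ d (n + 1) = -(-I) ^ n * (τ / ‖alph τ d‖ ^ (n + 1)) * Kc τ d (n + 1) := by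
  have hd : d ≠ 0 := (h0.trans hτd).ne'
  have ha : alphAbs τ d ≠ 0 := (alphAbs_pos h0 hτd).ne'
  have hpq := one_add_alph_mul_one_sub_alph_mul h0 hτd
  have hqp : (1 - alph τ d) * (1 + alph τ d) * τ = 2 * d * alphAbs τ d := by
    rw [← hpq]; ring
  have hlast : (-1) ^ (n + 1 + 1) * I * τ / alph τ d ^ (n + 1) =
      -(-I) ^ n * (τ / alphAbs τ d ^ (n + 1)) := by
    rw [alph_eq]; exact neg_one_pow_mul_I_div_pow τ _ n
  rw [Cm, Kc, mul_div_assoc ((-1 : ℂ) ^ (n + 1 + 1)), div_pow_succ_eq_of_mul_mul_eq hd ha hpq,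
    div_pow_succ_eq_of_mul_mul_eq hd ha hqp, hlast, norm_alph h0 hτd, Nat.add_sub_cancel]
  ring

lemma norm_Cm_succ {τ d : ℝ} (h0 : 0 < τ) (hτd : τ < d) (n : ℕ) :
    ‖Cm τ d (n + 1)‖ = τ / ‖alph τ d‖ ^ (n + 1) * ‖Kc τ d (n + 1)‖ := by
  rw [Cm_succ_eq h0 hτd, norm_mul, norm_mul, norm_neg, norm_pow, norm_neg, norm_I, one_pow,
    one_mul, ← ofReal_pow, ← ofReal_div, norm_real, Real.norm_of_nonneg (by positivity)]

/-- For `m ≥ 3`, `K_m ≥ 1 - 2^{1-m/2}(τ/d)^{m-1} ≥ 1 - 1/√2`; in particular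
`|C₃| ≥ (1 - 1/√2) τ/|α|³`. -/
theorem K_lower_bound (τ d : ℝ) (h0 : 0 < τ) (hτd : τ < d) (m : ℕ) (hm : 3 ≤ m) :
    1 - (2 : ℝ) ^ ((1 : ℝ) - (m : ℝ) / 2) * (τ / d) ^ (m - 1) ≤ (Kc τ d m).re ∧
    1 - 1 / Real.sqrt 2 ≤ 1 - (2 : ℝ) ^ ((1 : ℝ) - (m : ℝ) / 2) * (τ / d) ^ (m - 1) ∧
    (1 - 1 / Real.sqrt 2) * τ / ‖alph τ d‖ ^ 3 ≤ ‖Cm τ d 3‖ := by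
  have hd : 0 < d := h0.trans hτd
  have hratio₀ : 0 ≤ τ / d := div_nonneg h0.le hd.le
  have hratio₁ : τ / d ≤ 1 := (div_le_one hd).2 hτd.le
  have hK3 : 1 - 1 / √2 ≤ ‖Kc τ d 3‖ := by
    have := rpow_mul_pow_le_one_div_sqrt_two hratio₀ hratio₁ le_rfl
    linarith [one_sub_rpow_mul_pow_le_re_Kc h0 hτd 3, re_le_norm (Kc τ d 3)]
  refine ⟨one_sub_rpow_mul_pow_le_re_Kc h0 hτd m, ?_, ?_⟩
  · linarith [rpow_mul_pow_le_one_div_sqrt_two hratio₀ hratio₁ hm]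
  · rw [norm_Cm_succ h0 hτd 2, mul_div_assoc, mul_comm]
    exact mul_le_mul_of_nonneg_left hK3 (by positivity)
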